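/- arXiv:1912.11741 — 2 statements merged into one kernel-verified Lean document; each statement's English description precedes it below -/
import Mathlib

section
/- For all σ > 0 and p > 0 there exist constants c > 0 and C > 0 such that for every integer d ≥ 2 the following holds: letting w_d > 0 be the unique positive real with w_d·e^{w_d} = (d+1)/(pσ²) and t₀ := (2(d+1)·4^{p/(d+1)}/(e·p·w_d))·exp(1/w_d), one has binom(t₀+d, d)·((d+1)/(e·p))·4^{p/(d+1)} ≤ C·sqrt(d·ln(d))·exp(c·d·ln(ln(d))/ln(d)). -/
open Real Filter

/-- Generalized binomial coefficient `binom(t+d, d) = (1/d!) ∏_{i=1}^d (t+i)`. -/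
noncomputable def gbinom (t : ℝ) (d : ℕ) : ℝ :=
  (∏ i ∈ Finset.range d, (t + (i : ℝ) + 1)) / (Nat.factorial d : ℝ)

/-!
Write `L = log d`. For `M = w e^w` one has `log (1 + M) / 2 ≤ w ≤ log (1 + M)`, so `w ≍ L` and
`t₀ ≍ d / L`. Rounding `t₀` up to an integer `n`,
`binom(t₀ + d, d) ≤ binom(n + d, n) ≤ (n + d)^n / n! ≤ (e (1 + d / n))^n`, so the logarithm of the
left-hand side is at most `(t₀ + 1)(1 + log (1 + d / t₀)) + log d = O(d log L / L) + O(1)`.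
The range where `log L < 1` is bounded and only affects the constants.
-/

open Nat in
theorem gbinom_natCast (n d : ℕ) : gbinom n d = (n + d).choose d := by
  have hprod : ∏ i ∈ Finset.range d, ((n : ℝ) + i + 1) = ((n + 1).ascFactorial d : ℕ) := by
    rw [ascFactorial_eq_prod_range]
    push_cast
    exact Finset.prod_congr rfl fun i _ => by ring
  rw [gbinom, hprod, ascFactorial_eq_factorial_mul_choose, cast_mul]
  field_simp

theorem gbinom_mono {t s : ℝ} (ht : 0 ≤ t) (hts : t ≤ s) (d : ℕ) : gbinom t d ≤ gbinom s d := by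
  unfold gbinom
  gcongr

theorem gbinom_nonneg {t : ℝ} (ht : 0 ≤ t) (d : ℕ) : 0 ≤ gbinom t d := by
  unfold gbinom; positivity

theorem gbinom_le_exp {t : ℝ} (ht : 0 < t) (d : ℕ) :
    gbinom t d ≤ exp ((t + 1) * (1 + log (1 + d / t))) := by
  set n := ⌈t⌉₊
  have htn : t ≤ n := Nat.le_ceil t
  have hn : (0 : ℝ) < n := ht.trans_le htn
  have hnt : (n : ℝ) ≤ t + 1 := (Nat.ceil_lt_add_one ht.le).le
  have hlog : 0 ≤ log (1 + d / n) := log_nonneg (by simp; positivity)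
  calc gbinom t d ≤ (n + d).choose n := by
        rw [Nat.choose_symm_add, ← gbinom_natCast]; exact gbinom_mono ht.le htn d
    _ ≤ ((n + d : ℕ) : ℝ) ^ n / n.factorial := Nat.choose_le_pow_div n (n + d)
    _ = (1 + d / n) ^ n * (n ^ n / n.factorial) := by
        rw [one_add_div hn.ne', div_pow]; push_cast; field_simp
    _ ≤ (1 + d / n) ^ n * exp n := by gcongr; exact pow_div_factorial_le_exp _ hn.le n
    _ = exp (n * (1 + log (1 + d / n))) := by
        rw [mul_add, mul_one, exp_add, exp_nat_mul, exp_log (by positivity), mul_comm]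
    _ ≤ exp ((t + 1) * (1 + log (1 + d / t))) := by
        gcongr

theorem exp_le_one_add_mul_exp (w : ℝ) : exp w ≤ 1 + w * exp w := by
  have h := add_one_le_exp (-w)
  have h1 : exp (-w) * exp w = 1 := by rw [← exp_add, neg_add_cancel, exp_zero]
  nlinarith [exp_pos w]

theorem one_add_mul_exp_le_exp_two_mul {w : ℝ} (hw : 0 ≤ w) : 1 + w * exp w ≤ exp (2 * w) := by
  have h := add_one_le_exp w
  have h1 : exp (2 * w) = exp w * exp w := by rw [two_mul, exp_add]
  nlinarith [one_le_exp hw]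

theorem le_log_one_add_mul_exp (w : ℝ) : w ≤ log (1 + w * exp w) := by
  rw [le_log_iff_exp_le (by linarith [exp_le_one_add_mul_exp w, exp_pos w])]
  exact exp_le_one_add_mul_exp w

theorem log_one_add_mul_exp_le {w : ℝ} (hw : 0 ≤ w) : log (1 + w * exp w) ≤ 2 * w := by
  rw [log_le_iff_le_exp (by positivity)]
  exact one_add_mul_exp_le_exp_two_mul hw

theorem min_one_mul_log_one_add_le {a y : ℝ} (ha : 0 ≤ a) (hy : 0 ≤ y) :
    min 1 a * log (1 + y) ≤ log (1 + a * y) := by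
  rcases le_total 1 a with h | h
  · rw [min_eq_left h, one_mul]
    gcongr
    nlinarith
  · rw [min_eq_right h, ← log_rpow (by positivity)]
    gcongr
    exact rpow_one_add_le_one_add_mul_self (by linarith) ha h

theorem exists_log_bounds_of_mul_exp_eq {q : ℝ} (hq : 0 < q) :
    ∃ κ β : ℝ, 0 < κ ∧ 0 < β ∧ ∀ x : ℝ, 2 ≤ x → ∀ w : ℝ, 0 ≤ w →
      w * exp w = (x + 1) / q → κ * log x ≤ w ∧ w ≤ β * log x := by
  have hlog2 : 0 < log 2 := log_pos one_lt_two
  have hlogq : 0 ≤ log (1 + 2 / q) := log_nonneg (by simp; positivity)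
  refine ⟨min 1 q⁻¹ / 2, 1 + log (1 + 2 / q) / log 2, by positivity, by positivity, ?_⟩
  intro x hx w hw hwx
  have hlogx : log 2 ≤ log x := log_le_log two_pos hx
  have hupper := le_log_one_add_mul_exp w
  have hlower := log_one_add_mul_exp_le hw
  rw [hwx] at hupper hlower
  constructor
  · calc min 1 q⁻¹ / 2 * log x ≤ min 1 q⁻¹ * log (1 + (x + 1)) / 2 := by
          rw [div_mul_eq_mul_div]
          gcongr
          linarith
      _ ≤ log (1 + q⁻¹ * (x + 1)) / 2 := by
          gcongr; exact min_one_mul_log_one_add_le (by positivity) (by linarith)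
      _ ≤ w := by rw [inv_mul_eq_div]; linarith
  · calc w ≤ log (1 + (x + 1) / q) := hupper
      _ ≤ log (x * (1 + 2 / q)) := by
          gcongr
          rw [mul_add, mul_one, mul_div_assoc']
          gcongr <;> linarith
      _ = log x + log (1 + 2 / q) := log_mul (by positivity) (by positivity)
      _ ≤ log x + log (1 + 2 / q) / log 2 * log x := by
          have : log (1 + 2 / q) ≤ log (1 + 2 / q) / log 2 * log x := by
            rw [div_mul_eq_mul_div, le_div_iff₀ hlog2]
            gcongr
          linarith
      _ = (1 + log (1 + 2 / q) / log 2) * log x := by ring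

/-- The paper's `t₀`, with `A` standing for `4 ^ (p / (d + 1))`. -/
noncomputable def tZero (p x w A : ℝ) : ℝ := 2 * (x + 1) * A / (exp 1 * p * w) * exp (1 / w)

section tZero

variable {p x w A : ℝ}

theorem tZero_pos (hp : 0 < p) (hx : 0 ≤ x) (hw : 0 < w) (hA : 0 < A) : 0 < tZero p x w A := by
  unfold tZero; positivity

theorem tZero_le {κ A₀ : ℝ} (hp : 0 < p) (hκ : 0 < κ) (hx : 2 ≤ x) (hA : A ≤ A₀) (hA0 : 0 ≤ A)
    (hw : κ * log x ≤ w) :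
    tZero p x w A ≤ 4 * A₀ * exp (1 / (κ * log 2)) / (exp 1 * p * κ) * (x / log x) := by
  have hL2 : log 2 ≤ log x := log_le_log two_pos hx
  have hL : 0 < log x := (log_pos one_lt_two).trans_le hL2
  have hw2 : κ * log 2 ≤ w := by nlinarith
  have hA₀ : 0 ≤ A₀ := hA0.trans hA
  calc tZero p x w A
      ≤ 2 * (2 * x) * A₀ / (exp 1 * p * (κ * log x)) * exp (1 / (κ * log 2)) := by
        unfold tZero
        gcongr
        linarith
    _ = 4 * A₀ * exp (1 / (κ * log 2)) / (exp 1 * p * κ) * (x / log x) := by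
        field_simp; ring

theorem div_tZero_le {β : ℝ} (hp : 0 < p) (hx : 0 ≤ x) (hA : 1 ≤ A) (hw : 0 < w)
    (hwβ : w ≤ β * log x) : x / tZero p x w A ≤ exp 1 * p * β / 2 * log x := by
  have ht := tZero_pos (A := A) hp hx hw (by linarith)
  rw [div_le_iff₀ ht]
  calc x ≤ (x + 1) * (A * exp (1 / w)) := by
        nlinarith [one_le_exp (by positivity : 0 ≤ 1 / w), one_le_mul_of_one_le_of_one_le hA
          (one_le_exp (by positivity : 0 ≤ 1 / w))]
    _ = exp 1 * p / 2 * w * tZero p x w A := by unfold tZero; field_simp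
    _ ≤ exp 1 * p / 2 * (β * log x) * tZero p x w A := by gcongr
    _ = exp 1 * p * β / 2 * log x * tZero p x w A := by ring

end tZero

noncomputable def logLogRate (x : ℝ) : ℝ := x * log (log x) / log x

theorem log_le_two_mul_div_log {x : ℝ} (hx : 1 < x) : log x ≤ 2 * (x / log x) := by
  have hL : 0 < log x := log_pos hx
  have h := quadratic_le_exp_of_nonneg hL.le
  rw [exp_log (by linarith)] at h
  rw [mul_div_assoc', le_div_iff₀ hL]
  nlinarith

theorem div_log_le_logLogRate_add {x : ℝ} (hx : 2 ≤ x) :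
    x / log x ≤ logLogRate x + 2 * exp (exp 1) / log 2 := by
  have hlog2 : 0 < log 2 := log_pos one_lt_two
  have hL2 : log 2 ≤ log x := log_le_log two_pos hx
  have hL : 0 < log x := hlog2.trans_le hL2
  have hu : 0 ≤ x / log x := by positivity
  suffices x / log x * (1 - log (log x)) ≤ 2 * exp (exp 1) / log 2 by
    rw [logLogRate, mul_div_right_comm]; linarith
  rcases le_total 1 (log (log x)) with hℓ | hℓ
  · have : x / log x * (1 - log (log x)) ≤ 0 := mul_nonpos_of_nonneg_of_nonpos hu (by linarith)
    linarith [show 0 ≤ 2 * exp (exp 1) / log 2 by positivity]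
  · have hLe : log x ≤ exp 1 := by rwa [← log_le_iff_le_exp hL]
    have hxe : x ≤ exp (exp 1) := by rwa [← log_le_iff_le_exp (by linarith)]
    have hℓ1 : -1 ≤ log (log x) := by
      rw [le_log_iff_exp_le hL]
      linarith [exp_neg_one_lt_d9, log_two_gt_d9]
    calc x / log x * (1 - log (log x)) ≤ exp (exp 1) / log 2 * 2 := by
          gcongr; linarith
      _ = 2 * exp (exp 1) / log 2 := by ring

theorem exists_exponent_le_logLogRate {K b : ℝ} (hK : 0 ≤ K) (hb : 0 ≤ b) :
    ∃ c B : ℝ, 0 < c ∧ ∀ x : ℝ, 2 ≤ x →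
      (K * (x / log x) + 1) * (b + log (log x)) + log x ≤ c * logLogRate x + B := by
  set M := 2 * exp (exp 1) / log 2
  refine ⟨K * b + K + 4, K * b * M + b + 4 * M, by positivity, fun x hx => ?_⟩
  have hL : 0 < log x := log_pos (by linarith)
  have hℓ : log (log x) ≤ log x := (log_le_sub_one_of_pos hL).trans (by linarith)
  have hLu := log_le_two_mul_div_log (by linarith : 1 < x)
  have hu := div_log_le_logLogRate_add hx
  have hX : x / log x * log (log x) = logLogRate x := by rw [logLogRate, mul_div_right_comm]
  have hKb : K * b * (x / log x) ≤ K * b * (logLogRate x + M) := by gcongr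
  linear_combination hKb + hℓ + 2 * hLu + 4 * hu + K * hX

theorem exists_mul_gbinom_le {K b : ℝ} (hK : 0 ≤ K) (hb : 0 ≤ b) :
    ∃ c C : ℝ, 0 < c ∧ 0 < C ∧ ∀ d : ℕ, 2 ≤ d → ∀ t : ℝ, 0 < t →
      t ≤ K * (d / log d) → d / t ≤ b * log d → d * gbinom t d ≤ C * exp (c * logLogRate d) := by
  set b' := 1 + log (1 / log 2 + b)
  have hlog2 : 0 < log 2 := log_pos one_lt_two
  have hb' : 0 ≤ b' := by
    have := one_le_one_div hlog2 (by linarith [log_two_lt_d9])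
    linarith [log_nonneg (by linarith : 1 ≤ 1 / log 2 + b)]
  obtain ⟨c, B, hc, hexp⟩ := exists_exponent_le_logLogRate hK hb'
  refine ⟨c, exp B, hc, exp_pos B, fun d hd t ht htK hdt => ?_⟩
  have hd2 : (2 : ℝ) ≤ d := by exact_mod_cast hd
  have hL2 : log 2 ≤ log d := log_le_log two_pos hd2
  have hL : 0 < log d := hlog2.trans_le hL2
  have hlog_le : 1 + log (1 + d / t) ≤ b' + log (log d) := by
    have : 1 + d / t ≤ (1 / log 2 + b) * log d := by
      rw [add_mul, one_div_mul_eq_div]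
      linarith [(one_le_div hlog2).mpr hL2]
    have := log_le_log (by positivity) this
    rw [log_mul (by positivity) hL.ne'] at this
    linarith
  have hmul : (t + 1) * (1 + log (1 + d / t)) ≤ (K * (d / log d) + 1) * (b' + log (log d)) := by
    gcongr
    exact add_nonneg zero_le_one (log_nonneg (by simp; positivity))
  calc (d : ℝ) * gbinom t d ≤ exp (log d) * exp ((t + 1) * (1 + log (1 + d / t))) := by
        rw [exp_log (by positivity)]; gcongr; exact gbinom_le_exp ht d
    _ ≤ exp B * exp (c * logLogRate d) := by
        rw [← exp_add, ← exp_add, exp_le_exp]; linarith [hexp d hd2, hmul]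

theorem poly_const_growth_in_d (σ p : ℝ) (hσ : 0 < σ) (hp : 0 < p) :
    ∃ c C : ℝ, 0 < c ∧ 0 < C ∧
      ∀ d : ℕ, 2 ≤ d → ∀ w : ℝ, 0 < w →
        w * Real.exp w = ((d : ℝ) + 1) / (p * σ ^ 2) →
        gbinom (2 * ((d : ℝ) + 1) * (4 : ℝ) ^ (p / ((d : ℝ) + 1)) /
            (Real.exp 1 * p * w) * Real.exp (1 / w)) d *
          (((d : ℝ) + 1) / (Real.exp 1 * p)) * (4 : ℝ) ^ (p / ((d : ℝ) + 1)) ≤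
        C * Real.sqrt ((d : ℝ) * Real.log d) *
          Real.exp (c * (d : ℝ) * Real.log (Real.log d) / Real.log d) := by
  obtain ⟨κ, β, hκ, hβ, hlambert⟩ := exists_log_bounds_of_mul_exp_eq (q := p * σ ^ 2) (by positivity)
  set A₀ : ℝ := 4 ^ (p / 3)
  obtain ⟨c, C, hc, hC, hbinom⟩ := exists_mul_gbinom_le
    (K := 4 * A₀ * exp (1 / (κ * log 2)) / (exp 1 * p * κ)) (b := exp 1 * p * β / 2)
    (by positivity) (by positivity)
  refine ⟨c, 2 * A₀ / (exp 1 * p) * C, hc, by positivity, fun d hd w hw hwd => ?_⟩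
  have hd2 : (2 : ℝ) ≤ d := by exact_mod_cast hd
  obtain ⟨hκw, hwβ⟩ := hlambert d hd2 w hw.le hwd
  set A : ℝ := 4 ^ (p / (d + 1))
  have hA : 1 ≤ A := one_le_rpow (by norm_num) (by positivity)
  have hAA₀ : A ≤ A₀ := rpow_le_rpow_of_exponent_le (by norm_num) (by gcongr; linarith)
  have ht := tZero_pos (x := d) (A := A) hp (by linarith) hw (by linarith)
  have hgbinom := hbinom d hd (tZero p d w A) ht (tZero_le hp hκ hd2 hAA₀ (by linarith) hκw)
    (div_tZero_le hp (by linarith) hA hw hwβ)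
  have hsqrt : 1 ≤ √(d * log d) := by
    rw [one_le_sqrt]
    nlinarith [log_two_gt_d9, log_le_log two_pos hd2]
  calc gbinom (tZero p d w A) d * ((d + 1) / (exp 1 * p)) * A
      = gbinom (tZero p d w A) d * ((d + 1) / (exp 1 * p) * A) := by ring
    _ ≤ gbinom (tZero p d w A) d * (2 * d / (exp 1 * p) * A₀) :=
        mul_le_mul_of_nonneg_left (by gcongr; linarith) (gbinom_nonneg ht.le d)
    _ = 2 * A₀ / (exp 1 * p) * (d * gbinom (tZero p d w A) d) := by ring
    _ ≤ 2 * A₀ / (exp 1 * p) * (C * √(d * log d) * exp (c * logLogRate d)) := by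
        refine mul_le_mul_of_nonneg_left (hgbinom.trans ?_) (by positivity)
        exact mul_le_mul_of_nonneg_right (le_mul_of_one_le_right hC.le hsqrt) (exp_pos _).le
    _ = _ := by rw [logLogRate, mul_div_assoc', ← mul_assoc c]; ring
end

section
/- Let C > 0 and let d ≥ 1 be an integer with d ≥ 2Ce². Set y₀ := (d/(2C))·ln(d/(2eC)) (so that ε₀ := 4·e^{−y₀} is the threshold of the paper). Then: (i) y₀ ≥ e², i.e. ε₀ ≤ 4·exp(−e²); (ii) the unique w₀ > 0 with w₀·e^{w₀} = y₀/e satisfies 2y₀/w₀ = d/C; (iii) binom(d/C + d, d)·(ln(y₀)/y₀)^d ≤ (2π)^{−1/2}·(4e)^d·(1+C)^d·d^{−(d+1/2)}; and (iv) if moreover 1/sqrt(360e) ≤ C ≤ 1/(2e²), then y₀ ≤ 90d² + 11d + 3, i.e. ε₀ ≥ exp(−90d² − 11d − 3). -/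
open Real Filter

/-! With `a := d / (2C) ≥ e²` one has `y₀ = a (log a - 1)`, so `w₀ = log a - 1` by injectivity
of `w ↦ w eʷ` on `[0, ∞)`, and `2 y₀ / w₀ = 2a = d / C`. From `log x ≤ x - 1` we get
`log a - 1 ≤ a / e²`, hence `a ≤ y₀ ≤ a² / e²` and `log y₀ / y₀ ≤ 2 / a = 4C / d`. Together with
`binom(t + d, d) ≤ (t + d)ᵈ / d!` and Stirling's lower bound for `d!` this gives (iii), while
`a² / e² ≤ 360 C² a² = 90 d²` gives (iv). -/

lemma strictMonoOn_mul_exp : StrictMonoOn (fun w : ℝ => w * exp w) (Set.Ici 0) :=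
  fun _ _ _ hy hxy => mul_lt_mul hxy (exp_le_exp.2 hxy.le) (exp_pos _) hy

lemma inv_factorial_le_stirling {n : ℕ} (hn : n ≠ 0) :
    (n.factorial : ℝ)⁻¹ ≤
      (2 * π) ^ (-(1 : ℝ) / 2) * exp 1 ^ n * (n : ℝ) ^ (-((n : ℝ) + 1 / 2)) := by
  have hn' : (0 : ℝ) < n := by positivity
  have hstirling : (2 * π) ^ (-(1 : ℝ) / 2) * exp 1 ^ n * (n : ℝ) ^ (-((n : ℝ) + 1 / 2)) =
      (√(2 * π * n) * (n / exp 1) ^ n)⁻¹ := by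
    rw [sqrt_eq_rpow, mul_rpow (by positivity) hn'.le, rpow_neg hn'.le, rpow_add hn',
      rpow_natCast, div_pow, show -(1 : ℝ) / 2 = -(1 / 2) by ring, rpow_neg (by positivity)]
    field_simp
  rw [hstirling]
  exact inv_anti₀ (by positivity) (Stirling.le_factorial_stirling n)

lemma gbinom_le_pow_div_factorial {t : ℝ} (ht : 0 ≤ t) (d : ℕ) :
    gbinom t d ≤ (t + d) ^ d / d.factorial := by
  have hprod : ∏ i ∈ Finset.range d, (t + i + 1) ≤ ∏ _i ∈ Finset.range d, (t + d) :=
    Finset.prod_le_prod (fun _ _ => by positivity) fun i hi => by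
      have : (i : ℝ) + 1 ≤ d := by exact_mod_cast Finset.mem_range.1 hi
      linarith
  rw [gbinom]
  gcongr
  simpa using hprod

lemma log_le_div_exp_one_sq_add_one {x : ℝ} (hx : 0 < x) : log x ≤ x / exp 1 ^ 2 + 1 := by
  have h := log_le_sub_one_of_pos (div_pos hx (pow_pos (exp_pos 1) 2))
  rw [log_div hx.ne' (by positivity), log_pow, log_exp] at h
  push_cast at h
  linarith

section

variable {a : ℝ}

lemma two_le_log_of_exp_one_sq_le (ha : exp 1 ^ 2 ≤ a) : 2 ≤ log a := by
  simpa [← exp_nat_mul] using log_le_log (by positivity) ha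

lemma mul_log_sub_one_le_sq_div (ha : 0 < a) : a * (log a - 1) ≤ a ^ 2 / exp 1 ^ 2 := by
  have := log_le_div_exp_one_sq_add_one ha
  calc a * (log a - 1) ≤ a * (a / exp 1 ^ 2) := by gcongr; linarith
    _ = a ^ 2 / exp 1 ^ 2 := by ring

lemma log_mul_log_sub_one_div_le (ha : exp 1 ^ 2 ≤ a) :
    log (a * (log a - 1)) / (a * (log a - 1)) ≤ 2 / a := by
  have ha0 : 0 < a := lt_of_lt_of_le (by positivity) ha
  have hlog := two_le_log_of_exp_one_sq_le ha
  have hy : 0 < a * (log a - 1) := by nlinarith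
  have hlog_y : log (a * (log a - 1)) ≤ 2 * (log a - 1) :=
    calc log (a * (log a - 1)) ≤ log (a ^ 2 / exp 1 ^ 2) :=
          log_le_log hy (mul_log_sub_one_le_sq_div ha0)
      _ = 2 * (log a - 1) := by
          rw [log_div (by positivity) (by positivity), log_pow, log_pow, log_exp]; ring
  calc log (a * (log a - 1)) / (a * (log a - 1)) ≤ 2 * (log a - 1) / (a * (log a - 1)) := by
        gcongr
    _ = 2 / a := by field_simp [show log a - 1 ≠ 0 by linarith]

lemma eq_log_sub_one_of_mul_exp_eq (ha : 0 < a) (hlog : 1 ≤ log a) {w : ℝ} (hw : 0 ≤ w)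
    (h : w * exp w = a * (log a - 1) / exp 1) : w = log a - 1 := by
  refine strictMonoOn_mul_exp.injOn hw (Set.mem_Ici.2 (by linarith)) ?_
  simp only [h, exp_sub, exp_log ha]
  ring

end

lemma one_le_mul_sq_of_one_div_sqrt_le {k C : ℝ} (hk : 0 < k) (h : 1 / √k ≤ C) :
    1 ≤ k * C ^ 2 := by
  rw [div_le_iff₀ (sqrt_pos.2 hk)] at h
  nlinarith [sq_sqrt hk.le]

lemma mul_log_sub_one_le_ninety_mul_sq {a C : ℝ} (ha : 0 < a)
    (hC : 1 / √(360 * exp 1) ≤ C) : a * (log a - 1) ≤ 90 * (2 * C * a) ^ 2 := by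
  have hCsq := one_le_mul_sq_of_one_div_sqrt_le (by positivity) hC
  have he : 1 * 1 ≤ 360 * exp 1 * C ^ 2 * exp 1 :=
    mul_le_mul hCsq (one_le_exp zero_le_one) zero_le_one (by positivity)
  calc a * (log a - 1) ≤ a ^ 2 / exp 1 ^ 2 := mul_log_sub_one_le_sq_div ha
    _ ≤ 90 * (2 * C * a) ^ 2 := by
        rw [div_le_iff₀ (by positivity)]
        nlinarith [mul_le_mul_of_nonneg_left he (sq_nonneg a)]

lemma gbinom_mul_pow_le {C r : ℝ} (hC : 0 < C) {d : ℕ} (hd : d ≠ 0) (hr0 : 0 ≤ r)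
    (hr : r ≤ 4 * C / d) :
    gbinom (d / C) d * r ^ d ≤
      (2 * π) ^ (-(1 : ℝ) / 2) * (4 * exp 1) ^ d * (1 + C) ^ d * (d : ℝ) ^ (-((d : ℝ) + 1 / 2)) :=
  calc gbinom (d / C) d * r ^ d
      ≤ (d / C + d) ^ d / d.factorial * (4 * C / d) ^ d := by
        gcongr
        exact gbinom_le_pow_div_factorial (by positivity) d
    _ = (4 * (1 + C)) ^ d * (d.factorial : ℝ)⁻¹ := by
        rw [div_mul_eq_mul_div, ← mul_pow, div_eq_mul_inv]
        congr 2
        field_simp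
    _ ≤ (4 * (1 + C)) ^ d *
          ((2 * π) ^ (-(1 : ℝ) / 2) * exp 1 ^ d * (d : ℝ) ^ (-((d : ℝ) + 1 / 2))) := by
        gcongr
        exact inv_factorial_le_stirling hd
    _ = _ := by rw [mul_pow, mul_pow]; ring

theorem range_const_bounds_general (C : ℝ) (hC : 0 < C) (d : ℕ)
    (hdC : 2 * C * Real.exp 1 ^ 2 ≤ (d : ℝ))
    (y₀ : ℝ) (hy₀ : y₀ = (d : ℝ) / (2 * C) * Real.log ((d : ℝ) / (2 * Real.exp 1 * C))) :
    Real.exp 1 ^ 2 ≤ y₀ ∧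
    (∀ w₀ : ℝ, 0 < w₀ → w₀ * Real.exp w₀ = y₀ / Real.exp 1 → 2 * y₀ / w₀ = (d : ℝ) / C) ∧
    gbinom ((d : ℝ) / C) d * (Real.log y₀ / y₀) ^ d ≤
      (2 * Real.pi) ^ (-(1 : ℝ) / 2) * (4 * Real.exp 1) ^ d * (1 + C) ^ d *
        (d : ℝ) ^ (-((d : ℝ) + 1 / 2)) ∧
    (1 / Real.sqrt (360 * Real.exp 1) ≤ C → C ≤ 1 / (2 * Real.exp 1 ^ 2) →
      y₀ ≤ 90 * (d : ℝ) ^ 2 + 11 * (d : ℝ) + 3) := by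
  have hd : (0 : ℝ) < d := lt_of_lt_of_le (by positivity) hdC
  set a := (d : ℝ) / (2 * C) with ha_def
  have hda : (d : ℝ) = 2 * C * a := by rw [ha_def]; field_simp
  have ha : exp 1 ^ 2 ≤ a := by rw [le_div_iff₀ (by positivity)]; linarith
  have ha0 : 0 < a := by positivity
  have hlog := two_le_log_of_exp_one_sq_le ha
  have hy : y₀ = a * (log a - 1) := by
    have harg : (d : ℝ) / (2 * exp 1 * C) = a / exp 1 := by rw [hda]; field_simp
    rw [hy₀, harg, log_div ha0.ne' (exp_pos 1).ne', log_exp]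
  have hya : a ≤ y₀ := by rw [hy]; nlinarith
  refine ⟨ha.trans hya, fun w hw hwy => ?_,
    gbinom_mul_pow_le hC (by exact_mod_cast hd.ne') ?_ ?_, fun hC360 _ => ?_⟩
  · rw [eq_log_sub_one_of_mul_exp_eq ha0 (by linarith) hw.le (hy ▸ hwy), hy, hda]
    field_simp [show log a - 1 ≠ 0 by linarith]
  · exact div_nonneg (by linarith [log_le_log ha0 hya]) (ha0.le.trans hya)
  · rw [hy, hda]
    exact (log_mul_log_sub_one_div_le ha).trans_eq (by field_simp; ring)
  · have := mul_log_sub_one_le_ninety_mul_sq ha0 hC360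
    rw [← hy, ← hda] at this
    linarith

theorem range_const_bounds (C : ℝ) (hC : 0 < C) (d : ℕ) (hd : 1 ≤ d)
    (hdC : 2 * C * Real.exp 1 ^ 2 ≤ (d : ℝ))
    (y₀ : ℝ) (hy₀ : y₀ = (d : ℝ) / (2 * C) * Real.log ((d : ℝ) / (2 * Real.exp 1 * C))) :
    Real.exp 1 ^ 2 ≤ y₀ ∧
    (∀ w₀ : ℝ, 0 < w₀ → w₀ * Real.exp w₀ = y₀ / Real.exp 1 → 2 * y₀ / w₀ = (d : ℝ) / C) ∧
    gbinom ((d : ℝ) / C) d * (Real.log y₀ / y₀) ^ d ≤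
      (2 * Real.pi) ^ (-(1 : ℝ) / 2) * (4 * Real.exp 1) ^ d * (1 + C) ^ d *
        (d : ℝ) ^ (-((d : ℝ) + 1 / 2)) ∧
    (1 / Real.sqrt (360 * Real.exp 1) ≤ C → C ≤ 1 / (2 * Real.exp 1 ^ 2) →
      y₀ ≤ 90 * (d : ℝ) ^ 2 + 11 * (d : ℝ) + 3) :=
  range_const_bounds_general C hC d hdC y₀ hy₀
end
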